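/- The group O⁺(3,1)(ℤ) is generated by the four reflections Ref_{H−E₁−E₂−E₃}, Ref_{E₁−E₂}, Ref_{E₂−E₃}, and Ref_{E₃}; that is, the subgroup of GL(4,ℤ) generated by these four matrices equals the full group {A ∈ GL(4,ℤ) : Aᵀ J A = J and the (0,0) entry of A is positive}. -/
import Mathlib

open Matrix

/-- The symmetric bilinear form `Q(x,y) = x₀y₀ − x₁y₁ − x₂y₂ − x₃y₃` on `ℤ⁴`. -/
def Q4 (x y : Fin 4 → ℤ) : ℤ := x 0 * y 0 - x 1 * y 1 - x 2 * y 2 - x 3 * y 3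

/-- The Gram matrix `J = diag(1,−1,−1,−1)` of `Q4`. -/
def J4 : Matrix (Fin 4) (Fin 4) ℤ := Matrix.diagonal ![1, -1, -1, -1]

/-- The matrix of the reflection `w ↦ w − (2·Q(v,w)/Q(v,v))·v` about `v`. -/
def reflMat4 (v : Fin 4 → ℤ) : Matrix (Fin 4) (Fin 4) ℤ :=
  Matrix.of fun i j => (if i = j then 1 else 0) - 2 * Q4 v (Pi.single j 1) / Q4 v v * v i

/-- `Ref_{H−E₁−E₂−E₃}` as an element of `GL(4,ℤ)`. -/
def refHE1E2E3 : (Matrix (Fin 4) (Fin 4) ℤ)ˣ :=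
  ⟨reflMat4 ![1, -1, -1, -1], reflMat4 ![1, -1, -1, -1], by decide, by decide⟩

/-- `Ref_{E₁−E₂}` as an element of `GL(4,ℤ)`. -/
def refE1E2' : (Matrix (Fin 4) (Fin 4) ℤ)ˣ :=
  ⟨reflMat4 ![0, 1, -1, 0], reflMat4 ![0, 1, -1, 0], by decide, by decide⟩

/-- `Ref_{E₂−E₃}` as an element of `GL(4,ℤ)`. -/
def refE2E3 : (Matrix (Fin 4) (Fin 4) ℤ)ˣ :=
  ⟨reflMat4 ![0, 0, 1, -1], reflMat4 ![0, 0, 1, -1], by decide, by decide⟩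

/-- `Ref_{E₃}` as an element of `GL(4,ℤ)`. -/
def refE3 : (Matrix (Fin 4) (Fin 4) ℤ)ˣ :=
  ⟨reflMat4 ![0, 0, 0, 1], reflMat4 ![0, 0, 0, 1], by decide, by decide⟩

/- ### Auxiliary infrastructure -/

abbrev refE1E2 := refE1E2'

def C4 : Subgroup (Matrix (Fin 4) (Fin 4) ℤ)ˣ :=
  Subgroup.closure {refHE1E2E3, refE1E2', refE2E3, refE3}

lemma hg1 : refHE1E2E3 ∈ C4 := Subgroup.subset_closure (Set.mem_insert _ _)
lemma hg2 : refE1E2' ∈ C4 :=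
  Subgroup.subset_closure (Set.mem_insert_of_mem _ (Set.mem_insert _ _))
lemma hg3 : refE2E3 ∈ C4 :=
  Subgroup.subset_closure (Set.mem_insert_of_mem _ (Set.mem_insert_of_mem _ (Set.mem_insert _ _)))
lemma hg4 : refE3 ∈ C4 :=
  Subgroup.subset_closure (Set.mem_insert_of_mem _ (Set.mem_insert_of_mem _
    (Set.mem_insert_of_mem _ rfl)))

/-- Sign flips of coordinates 1, 2, 3 as words in the generators. -/
def nF3 : (Matrix (Fin 4) (Fin 4) ℤ)ˣ := refE3
def nF2 : (Matrix (Fin 4) (Fin 4) ℤ)ˣ := refE2E3 * refE3 * refE2E3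
def nF1 : (Matrix (Fin 4) (Fin 4) ℤ)ˣ := refE1E2 * refE2E3 * refE3 * refE2E3 * refE1E2

lemma hn3 : nF3 ∈ C4 := hg4
lemma hn2 : nF2 ∈ C4 := mul_mem (mul_mem hg3 hg4) hg3
lemma hn1 : nF1 ∈ C4 := mul_mem (mul_mem (mul_mem (mul_mem hg2 hg3) hg4) hg3) hg2

lemma of_val_eq {A B : (Matrix (Fin 4) (Fin 4) ℤ)ˣ}
    (h : (A : Matrix (Fin 4) (Fin 4) ℤ) = (B : Matrix (Fin 4) (Fin 4) ℤ)) (hB : B ∈ C4) :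
    A ∈ C4 := by
  have : A = B := Units.ext h
  rwa [this]

lemma entry_eq (M : Matrix (Fin 4) (Fin 4) ℤ) (hJ : Mᵀ * J4 * M = J4) (i j : Fin 4) :
    M 0 i * M 0 j - M 1 i * M 1 j - M 2 i * M 2 j - M 3 i * M 3 j = J4 i j := by
  have := congrFun (congrFun hJ i) j
  simp [Matrix.mul_apply, Fin.sum_univ_four, J4, Matrix.diagonal, Matrix.transpose_apply]
    at this ⊢
  fin_cases i <;> fin_cases j <;> simp_all <;> linarith

lemma row_rel (M : Matrix (Fin 4) (Fin 4) ℤ) (hJ : Mᵀ * J4 * M = J4) :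
    M * J4 * Mᵀ = J4 := by
  have hJJ : J4 * J4 = 1 := by decide
  have h1 : (J4 * Mᵀ * J4) * M = 1 := by
    calc (J4 * Mᵀ * J4) * M = J4 * (Mᵀ * J4 * M) := by simp [Matrix.mul_assoc]
    _ = 1 := by rw [hJ, hJJ]
  have h2 : M * (J4 * Mᵀ * J4) = 1 := mul_eq_one_comm.mp h1
  calc M * J4 * Mᵀ = M * (J4 * Mᵀ * J4) * J4 := by simp [Matrix.mul_assoc, hJJ]
    _ = J4 := by rw [h2, Matrix.one_mul]

lemma inv_val (A : (Matrix (Fin 4) (Fin 4) ℤ)ˣ)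
    (hJ : (A : Matrix (Fin 4) (Fin 4) ℤ)ᵀ * J4 * A = J4) :
    ((A⁻¹ : (Matrix (Fin 4) (Fin 4) ℤ)ˣ) : Matrix (Fin 4) (Fin 4) ℤ)
      = J4 * (A : Matrix (Fin 4) (Fin 4) ℤ)ᵀ * J4 := by
  have hJJ : J4 * J4 = 1 := by decide
  have h1 : (J4 * (A : Matrix (Fin 4) (Fin 4) ℤ)ᵀ * J4) * A = 1 := by
    calc (J4 * (A : Matrix (Fin 4) (Fin 4) ℤ)ᵀ * J4) * A
        = J4 * ((A : Matrix (Fin 4) (Fin 4) ℤ)ᵀ * J4 * A) := by simp [Matrix.mul_assoc]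
    _ = 1 := by rw [hJ, hJJ]
  have := Matrix.inv_eq_left_inv h1
  rw [Matrix.coe_units_inv, this]

lemma cs_pos (p a b c q x y z : ℤ) (hp : 0 < p) (hq : 0 < q)
    (h1 : p*p - a*a - b*b - c*c = 1) (h2 : q*q - x*x - y*y - z*z = 1) :
    0 < p*q + a*x + b*y + c*z := by
  nlinarith [sq_nonneg (a*y - b*x), sq_nonneg (a*z - c*x), sq_nonneg (b*z - c*y),
    sq_nonneg (p*q + a*x + b*y + c*z), mul_pos hp hq, sq_nonneg (a*x + b*y + c*z)]

lemma mulrow (B M : Matrix (Fin 4) (Fin 4) ℤ) (b : Fin 4 → ℤ) (hb : B 0 = b) :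
    (B * M) 0 0 = b 0 * M 0 0 + b 1 * M 1 0 + b 2 * M 2 0 + b 3 * M 3 0 := by
  rw [Matrix.mul_apply, Fin.sum_univ_four, hb]

lemma corner_inv (M : Matrix (Fin 4) (Fin 4) ℤ) : (J4 * Mᵀ * J4) 0 0 = M 0 0 := by
  simp [J4, Matrix.mul_apply, Fin.sum_univ_four, Matrix.diagonal, Matrix.transpose_apply]

/- ### Forward direction: the closure is contained in O⁺(3,1)(ℤ) -/

lemma fwd (A : (Matrix (Fin 4) (Fin 4) ℤ)ˣ) (hA : A ∈ C4) :
    (A : Matrix (Fin 4) (Fin 4) ℤ)ᵀ * J4 * (A : Matrix (Fin 4) (Fin 4) ℤ) = J4 ∧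
      0 < (A : Matrix (Fin 4) (Fin 4) ℤ) 0 0 := by
  induction hA using Subgroup.closure_induction with
  | mem x hx =>
    simp only [Set.mem_insert_iff, Set.mem_singleton_iff] at hx
    rcases hx with rfl | rfl | rfl | rfl <;> exact ⟨by decide, by decide⟩
  | one => exact ⟨by decide, by decide⟩
  | mul x y hx hy ihx ihy =>
    obtain ⟨hxJ, hxp⟩ := ihx
    obtain ⟨hyJ, hyp⟩ := ihy
    constructor
    · rw [Units.val_mul, Matrix.transpose_mul]
      calc (y : Matrix (Fin 4) (Fin 4) ℤ)ᵀ * (x : Matrix (Fin 4) (Fin 4) ℤ)ᵀ * J4 *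
            ((x : Matrix (Fin 4) (Fin 4) ℤ) * (y : Matrix (Fin 4) (Fin 4) ℤ))
          = (y : Matrix (Fin 4) (Fin 4) ℤ)ᵀ *
            ((x : Matrix (Fin 4) (Fin 4) ℤ)ᵀ * J4 * (x : Matrix (Fin 4) (Fin 4) ℤ)) *
            (y : Matrix (Fin 4) (Fin 4) ℤ) := by simp [Matrix.mul_assoc]
        _ = J4 := by rw [hxJ]; exact hyJ
    · have hrow := entry_eq (x : Matrix (Fin 4) (Fin 4) ℤ)ᵀ
        (by rw [Matrix.transpose_transpose]; exact row_rel _ hxJ) 0 0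
      have hcol := entry_eq (y : Matrix (Fin 4) (Fin 4) ℤ) hyJ 0 0
      simp only [Matrix.transpose_apply] at hrow
      have hJ00 : J4 0 0 = 1 := by decide
      rw [hJ00] at hrow hcol
      have hmul : ((x * y : (Matrix (Fin 4) (Fin 4) ℤ)ˣ) : Matrix (Fin 4) (Fin 4) ℤ) 0 0 =
          (x : Matrix (Fin 4) (Fin 4) ℤ) 0 0 * (y : Matrix (Fin 4) (Fin 4) ℤ) 0 0 +
          (x : Matrix (Fin 4) (Fin 4) ℤ) 0 1 * (y : Matrix (Fin 4) (Fin 4) ℤ) 1 0 +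
          (x : Matrix (Fin 4) (Fin 4) ℤ) 0 2 * (y : Matrix (Fin 4) (Fin 4) ℤ) 2 0 +
          (x : Matrix (Fin 4) (Fin 4) ℤ) 0 3 * (y : Matrix (Fin 4) (Fin 4) ℤ) 3 0 := by
        rw [Units.val_mul, Matrix.mul_apply, Fin.sum_univ_four]
      rw [hmul]
      exact cs_pos _ _ _ _ _ _ _ _ hxp hyp hrow hcol
  | inv x hx ihx =>
    obtain ⟨hxJ, hxp⟩ := ihx
    have hval := inv_val x hxJ
    have hJJ : J4 * J4 = 1 := by decide
    have hJT : J4ᵀ = J4 := by decide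
    constructor
    · rw [hval]
      have hT : (J4 * (x : Matrix (Fin 4) (Fin 4) ℤ)ᵀ * J4)ᵀ
          = J4 * (x : Matrix (Fin 4) (Fin 4) ℤ) * J4 := by
        simp [Matrix.transpose_mul, hJT, Matrix.mul_assoc]
      rw [hT]
      have hr := row_rel _ hxJ
      calc J4 * (x : Matrix (Fin 4) (Fin 4) ℤ) * J4 * J4 *
            (J4 * (x : Matrix (Fin 4) (Fin 4) ℤ)ᵀ * J4)
          = J4 * ((x : Matrix (Fin 4) (Fin 4) ℤ) * ((J4 * J4) *
              (J4 * ((x : Matrix (Fin 4) (Fin 4) ℤ)ᵀ * J4)))) := by simp [Matrix.mul_assoc]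
        _ = J4 * ((x : Matrix (Fin 4) (Fin 4) ℤ) * J4 * (x : Matrix (Fin 4) (Fin 4) ℤ)ᵀ) * J4
            := by rw [hJJ, Matrix.one_mul]; simp [Matrix.mul_assoc]
        _ = J4 := by rw [hr, hJJ, Matrix.one_mul]
    · rw [hval, corner_inv]; exact hxp

/- ### The 48 block matrices with upper-left entry 1 -/

def L48 : List (Matrix (Fin 4) (Fin 4) ℤ) :=
  [!![1, 0, 0, 0; 0, 1, 0, 0; 0, 0, 1, 0; 0, 0, 0, 1],
  !![1, 0, 0, 0; 0, 0, 1, 0; 0, 1, 0, 0; 0, 0, 0, 1],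
  !![1, 0, 0, 0; 0, 1, 0, 0; 0, 0, 0, 1; 0, 0, 1, 0],
  !![1, 0, 0, 0; 0, 1, 0, 0; 0, 0, 1, 0; 0, 0, 0, -1],
  !![1, 0, 0, 0; 0, 0, 1, 0; 0, 0, 0, 1; 0, 1, 0, 0],
  !![1, 0, 0, 0; 0, 0, 1, 0; 0, 1, 0, 0; 0, 0, 0, -1],
  !![1, 0, 0, 0; 0, 0, 0, 1; 0, 1, 0, 0; 0, 0, 1, 0],
  !![1, 0, 0, 0; 0, 1, 0, 0; 0, 0, 0, 1; 0, 0, -1, 0],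
  !![1, 0, 0, 0; 0, 1, 0, 0; 0, 0, 0, -1; 0, 0, 1, 0],
  !![1, 0, 0, 0; 0, 0, 0, 1; 0, 0, 1, 0; 0, 1, 0, 0],
  !![1, 0, 0, 0; 0, 0, 1, 0; 0, 0, 0, 1; 0, -1, 0, 0],
  !![1, 0, 0, 0; 0, 0, 1, 0; 0, 0, 0, -1; 0, 1, 0, 0],
  !![1, 0, 0, 0; 0, 0, 0, 1; 0, 1, 0, 0; 0, 0, -1, 0],
  !![1, 0, 0, 0; 0, 1, 0, 0; 0, 0, -1, 0; 0, 0, 0, 1],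
  !![1, 0, 0, 0; 0, 0, 0, -1; 0, 1, 0, 0; 0, 0, 1, 0],
  !![1, 0, 0, 0; 0, 1, 0, 0; 0, 0, 0, -1; 0, 0, -1, 0],
  !![1, 0, 0, 0; 0, 0, 0, 1; 0, 0, 1, 0; 0, -1, 0, 0],
  !![1, 0, 0, 0; 0, 0, 1, 0; 0, -1, 0, 0; 0, 0, 0, 1],
  !![1, 0, 0, 0; 0, 0, 0, -1; 0, 0, 1, 0; 0, 1, 0, 0],
  !![1, 0, 0, 0; 0, 0, 1, 0; 0, 0, 0, -1; 0, -1, 0, 0],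
  !![1, 0, 0, 0; 0, 0, 0, 1; 0, 0, -1, 0; 0, 1, 0, 0],
  !![1, 0, 0, 0; 0, 0, -1, 0; 0, 1, 0, 0; 0, 0, 0, 1],
  !![1, 0, 0, 0; 0, 1, 0, 0; 0, 0, -1, 0; 0, 0, 0, -1],
  !![1, 0, 0, 0; 0, 0, 0, -1; 0, 1, 0, 0; 0, 0, -1, 0],
  !![1, 0, 0, 0; 0, 0, 0, 1; 0, -1, 0, 0; 0, 0, 1, 0],
  !![1, 0, 0, 0; 0, -1, 0, 0; 0, 0, 1, 0; 0, 0, 0, 1],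
  !![1, 0, 0, 0; 0, 0, 1, 0; 0, -1, 0, 0; 0, 0, 0, -1],
  !![1, 0, 0, 0; 0, 0, 0, -1; 0, 0, 1, 0; 0, -1, 0, 0],
  !![1, 0, 0, 0; 0, 0, -1, 0; 0, 0, 0, 1; 0, 1, 0, 0],
  !![1, 0, 0, 0; 0, 0, 0, 1; 0, 0, -1, 0; 0, -1, 0, 0],
  !![1, 0, 0, 0; 0, 0, -1, 0; 0, 1, 0, 0; 0, 0, 0, -1],
  !![1, 0, 0, 0; 0, 0, 0, -1; 0, 0, -1, 0; 0, 1, 0, 0],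
  !![1, 0, 0, 0; 0, -1, 0, 0; 0, 0, 0, 1; 0, 0, 1, 0],
  !![1, 0, 0, 0; 0, 0, 0, 1; 0, -1, 0, 0; 0, 0, -1, 0],
  !![1, 0, 0, 0; 0, -1, 0, 0; 0, 0, 1, 0; 0, 0, 0, -1],
  !![1, 0, 0, 0; 0, 0, 0, -1; 0, -1, 0, 0; 0, 0, 1, 0],
  !![1, 0, 0, 0; 0, 0, -1, 0; 0, 0, 0, 1; 0, -1, 0, 0],
  !![1, 0, 0, 0; 0, 0, -1, 0; 0, 0, 0, -1; 0, 1, 0, 0],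
  !![1, 0, 0, 0; 0, 0, 0, -1; 0, 0, -1, 0; 0, -1, 0, 0],
  !![1, 0, 0, 0; 0, -1, 0, 0; 0, 0, 0, 1; 0, 0, -1, 0],
  !![1, 0, 0, 0; 0, -1, 0, 0; 0, 0, 0, -1; 0, 0, 1, 0],
  !![1, 0, 0, 0; 0, 0, 0, -1; 0, -1, 0, 0; 0, 0, -1, 0],
  !![1, 0, 0, 0; 0, 0, -1, 0; 0, -1, 0, 0; 0, 0, 0, 1],
  !![1, 0, 0, 0; 0, 0, -1, 0; 0, 0, 0, -1; 0, -1, 0, 0],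
  !![1, 0, 0, 0; 0, -1, 0, 0; 0, 0, -1, 0; 0, 0, 0, 1],
  !![1, 0, 0, 0; 0, -1, 0, 0; 0, 0, 0, -1; 0, 0, -1, 0],
  !![1, 0, 0, 0; 0, 0, -1, 0; 0, -1, 0, 0; 0, 0, 0, -1],
  !![1, 0, 0, 0; 0, -1, 0, 0; 0, 0, -1, 0; 0, 0, 0, -1]]

def cols6 : Fin 6 → ℤ × ℤ × ℤ := ![(1,0,0),(-1,0,0),(0,1,0),(0,-1,0),(0,0,1),(0,0,-1)]

def dot3 (a b : ℤ × ℤ × ℤ) : ℤ := a.1 * b.1 + a.2.1 * b.2.1 + a.2.2 * b.2.2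

def M4of (k1 k2 k3 : Fin 6) : Matrix (Fin 4) (Fin 4) ℤ :=
  !![1, 0, 0, 0;
     0, (cols6 k1).1, (cols6 k2).1, (cols6 k3).1;
     0, (cols6 k1).2.1, (cols6 k2).2.1, (cols6 k3).2.1;
     0, (cols6 k1).2.2, (cols6 k2).2.2, (cols6 k3).2.2]

lemma enum6 : ∀ k1 k2 k3 : Fin 6, dot3 (cols6 k1) (cols6 k2) = 0 →
    dot3 (cols6 k1) (cols6 k3) = 0 → dot3 (cols6 k2) (cols6 k3) = 0 →
    M4of k1 k2 k3 ∈ L48 := by decide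

lemma col_struct (x y z : ℤ) (h : x*x + y*y + z*z = 1) : ∃ k : Fin 6, (x,y,z) = cols6 k := by
  have hx1 : -1 ≤ x := by nlinarith [sq_nonneg y, sq_nonneg z]
  have hx2 : x ≤ 1 := by nlinarith [sq_nonneg y, sq_nonneg z]
  have hy1 : -1 ≤ y := by nlinarith [sq_nonneg x, sq_nonneg z]
  have hy2 : y ≤ 1 := by nlinarith [sq_nonneg x, sq_nonneg z]
  have hz1 : -1 ≤ z := by nlinarith [sq_nonneg x, sq_nonneg y]
  have hz2 : z ≤ 1 := by nlinarith [sq_nonneg x, sq_nonneg y]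
  interval_cases x <;> interval_cases y <;> interval_cases z <;>
    first | (exfalso; omega) | decide

lemma block_mem (A : (Matrix (Fin 4) (Fin 4) ℤ)ˣ)
    (hA : (A : Matrix (Fin 4) (Fin 4) ℤ) ∈ L48) : A ∈ C4 := by
  simp only [L48, List.mem_cons, List.not_mem_nil, or_false] at hA
  rcases hA with h|h|h|h|h|h|h|h|h|h|h|h|h|h|h|h|h|h|h|h|h|h|h|h|h|h|h|h|h|h|h|h|h|h|h|h|h|h|h|h|h|h|h|h|h|h|h|h
  · exact of_val_eq (h.trans (by decide)) (one_mem C4)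
  · exact of_val_eq (h.trans (by decide)) (hg2)
  · exact of_val_eq (h.trans (by decide)) (hg3)
  · exact of_val_eq (h.trans (by decide)) (hg4)
  · exact of_val_eq (h.trans (by decide)) (mul_mem hg3 (hg2))
  · exact of_val_eq (h.trans (by decide)) (mul_mem hg4 (hg2))
  · exact of_val_eq (h.trans (by decide)) (mul_mem hg2 (hg3))
  · exact of_val_eq (h.trans (by decide)) (mul_mem hg4 (hg3))
  · exact of_val_eq (h.trans (by decide)) (mul_mem hg3 (hg4))
  · exact of_val_eq (h.trans (by decide)) (mul_mem hg2 (mul_mem hg3 (hg2)))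
  · exact of_val_eq (h.trans (by decide)) (mul_mem hg4 (mul_mem hg3 (hg2)))
  · exact of_val_eq (h.trans (by decide)) (mul_mem hg3 (mul_mem hg4 (hg2)))
  · exact of_val_eq (h.trans (by decide)) (mul_mem hg4 (mul_mem hg2 (hg3)))
  · exact of_val_eq (h.trans (by decide)) (mul_mem hg3 (mul_mem hg4 (hg3)))
  · exact of_val_eq (h.trans (by decide)) (mul_mem hg2 (mul_mem hg3 (hg4)))
  · exact of_val_eq (h.trans (by decide)) (mul_mem hg4 (mul_mem hg3 (hg4)))
  · exact of_val_eq (h.trans (by decide)) (mul_mem hg4 (mul_mem hg2 (mul_mem hg3 (hg2))))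
  · exact of_val_eq (h.trans (by decide)) (mul_mem hg3 (mul_mem hg4 (mul_mem hg3 (hg2))))
  · exact of_val_eq (h.trans (by decide)) (mul_mem hg2 (mul_mem hg3 (mul_mem hg4 (hg2))))
  · exact of_val_eq (h.trans (by decide)) (mul_mem hg4 (mul_mem hg3 (mul_mem hg4 (hg2))))
  · exact of_val_eq (h.trans (by decide)) (mul_mem hg3 (mul_mem hg4 (mul_mem hg2 (hg3))))
  · exact of_val_eq (h.trans (by decide)) (mul_mem hg2 (mul_mem hg3 (mul_mem hg4 (hg3))))
  · exact of_val_eq (h.trans (by decide)) (mul_mem hg4 (mul_mem hg3 (mul_mem hg4 (hg3))))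
  · exact of_val_eq (h.trans (by decide)) (mul_mem hg4 (mul_mem hg2 (mul_mem hg3 (hg4))))
  · exact of_val_eq (h.trans (by decide)) (mul_mem hg3 (mul_mem hg4 (mul_mem hg2 (mul_mem hg3 (hg2)))))
  · exact of_val_eq (h.trans (by decide)) (mul_mem hg2 (mul_mem hg3 (mul_mem hg4 (mul_mem hg3 (hg2)))))
  · exact of_val_eq (h.trans (by decide)) (mul_mem hg4 (mul_mem hg3 (mul_mem hg4 (mul_mem hg3 (hg2)))))
  · exact of_val_eq (h.trans (by decide)) (mul_mem hg4 (mul_mem hg2 (mul_mem hg3 (mul_mem hg4 (hg2)))))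
  · exact of_val_eq (h.trans (by decide)) (mul_mem hg2 (mul_mem hg3 (mul_mem hg4 (mul_mem hg2 (hg3)))))
  · exact of_val_eq (h.trans (by decide)) (mul_mem hg4 (mul_mem hg3 (mul_mem hg4 (mul_mem hg2 (hg3)))))
  · exact of_val_eq (h.trans (by decide)) (mul_mem hg4 (mul_mem hg2 (mul_mem hg3 (mul_mem hg4 (hg3)))))
  · exact of_val_eq (h.trans (by decide)) (mul_mem hg3 (mul_mem hg4 (mul_mem hg2 (mul_mem hg3 (hg4)))))
  · exact of_val_eq (h.trans (by decide)) (mul_mem hg2 (mul_mem hg3 (mul_mem hg4 (mul_mem hg2 (mul_mem hg3 (hg2))))))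
  · exact of_val_eq (h.trans (by decide)) (mul_mem hg4 (mul_mem hg3 (mul_mem hg4 (mul_mem hg2 (mul_mem hg3 (hg2))))))
  · exact of_val_eq (h.trans (by decide)) (mul_mem hg4 (mul_mem hg2 (mul_mem hg3 (mul_mem hg4 (mul_mem hg3 (hg2))))))
  · exact of_val_eq (h.trans (by decide)) (mul_mem hg3 (mul_mem hg4 (mul_mem hg2 (mul_mem hg3 (mul_mem hg4 (hg2))))))
  · exact of_val_eq (h.trans (by decide)) (mul_mem hg4 (mul_mem hg2 (mul_mem hg3 (mul_mem hg4 (mul_mem hg2 (hg3))))))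
  · exact of_val_eq (h.trans (by decide)) (mul_mem hg3 (mul_mem hg4 (mul_mem hg2 (mul_mem hg3 (mul_mem hg4 (hg3))))))
  · exact of_val_eq (h.trans (by decide)) (mul_mem hg4 (mul_mem hg3 (mul_mem hg4 (mul_mem hg2 (mul_mem hg3 (hg4))))))
  · exact of_val_eq (h.trans (by decide)) (mul_mem hg4 (mul_mem hg2 (mul_mem hg3 (mul_mem hg4 (mul_mem hg2 (mul_mem hg3 (hg2)))))))
  · exact of_val_eq (h.trans (by decide)) (mul_mem hg3 (mul_mem hg4 (mul_mem hg2 (mul_mem hg3 (mul_mem hg4 (mul_mem hg3 (hg2)))))))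
  · exact of_val_eq (h.trans (by decide)) (mul_mem hg4 (mul_mem hg3 (mul_mem hg4 (mul_mem hg2 (mul_mem hg3 (mul_mem hg4 (hg2)))))))
  · exact of_val_eq (h.trans (by decide)) (mul_mem hg3 (mul_mem hg4 (mul_mem hg2 (mul_mem hg3 (mul_mem hg4 (mul_mem hg2 (hg3)))))))
  · exact of_val_eq (h.trans (by decide)) (mul_mem hg4 (mul_mem hg3 (mul_mem hg4 (mul_mem hg2 (mul_mem hg3 (mul_mem hg4 (hg3)))))))
  · exact of_val_eq (h.trans (by decide)) (mul_mem hg3 (mul_mem hg4 (mul_mem hg2 (mul_mem hg3 (mul_mem hg4 (mul_mem hg2 (mul_mem hg3 (hg2))))))))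
  · exact of_val_eq (h.trans (by decide)) (mul_mem hg4 (mul_mem hg3 (mul_mem hg4 (mul_mem hg2 (mul_mem hg3 (mul_mem hg4 (mul_mem hg3 (hg2))))))))
  · exact of_val_eq (h.trans (by decide)) (mul_mem hg4 (mul_mem hg3 (mul_mem hg4 (mul_mem hg2 (mul_mem hg3 (mul_mem hg4 (mul_mem hg2 (hg3))))))))
  · exact of_val_eq (h.trans (by decide)) (mul_mem hg4 (mul_mem hg3 (mul_mem hg4 (mul_mem hg2 (mul_mem hg3 (mul_mem hg4 (mul_mem hg2 (mul_mem hg3 (hg2)))))))))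

/- ### Arithmetic of the descent -/

lemma arith4 (t x y z : ℤ) (ht : 2 ≤ t) (h : t*t - x*x - y*y - z*z = 1)
    (hx : 0 ≤ x) (hy : 0 ≤ y) (hz : 0 ≤ z) : t < x+y+z ∧ x+y+z < 2*t := by
  have one_var : ∀ w : ℤ, t*t - w*w = 1 → False := by
    intro w hw
    have h1 : (t-w)*(t+w) = 1 := by ring_nf; linarith
    rcases Int.mul_eq_one_iff_eq_one_or_neg_one.mp h1 with ⟨h2,h3⟩|⟨h2,h3⟩ <;> omega
  constructor
  · have key : 1 ≤ x*y + y*z + z*x := by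
      by_contra hk
      push_neg at hk
      have hxy : x*y = 0 := by nlinarith [mul_nonneg hx hy, mul_nonneg hy hz, mul_nonneg hz hx]
      have hyz : y*z = 0 := by nlinarith [mul_nonneg hx hy, mul_nonneg hy hz, mul_nonneg hz hx]
      have hzx : z*x = 0 := by nlinarith [mul_nonneg hx hy, mul_nonneg hy hz, mul_nonneg hz hx]
      rcases mul_eq_zero.mp hxy with h1 | h1 <;>
      rcases mul_eq_zero.mp hyz with h2 | h2 <;>
      rcases mul_eq_zero.mp hzx with h3 | h3 <;>
        subst_vars <;>
        first
          | exact one_var x (by linarith)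
          | exact one_var y (by linarith)
          | exact one_var z (by linarith)
          | exact one_var 0 (by linarith)
    nlinarith [sq_nonneg (x+y+z), sq_nonneg t]
  · nlinarith [sq_nonneg (x-y), sq_nonneg (y-z), sq_nonneg (z-x)]

/- ### The descent step -/

lemma step (A : (Matrix (Fin 4) (Fin 4) ℤ)ˣ)
    (hJ : (A : Matrix (Fin 4) (Fin 4) ℤ)ᵀ * J4 * A = J4)
    (ht : 2 ≤ (A : Matrix (Fin 4) (Fin 4) ℤ) 0 0) :
    ∃ B : (Matrix (Fin 4) (Fin 4) ℤ)ˣ, B ∈ C4 ∧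
      (B : Matrix (Fin 4) (Fin 4) ℤ)ᵀ * J4 * B = J4 ∧
      0 < ((B : Matrix (Fin 4) (Fin 4) ℤ) * A) 0 0 ∧
      ((B : Matrix (Fin 4) (Fin 4) ℤ) * A) 0 0 < (A : Matrix (Fin 4) (Fin 4) ℤ) 0 0 := by
  set t := (A : Matrix (Fin 4) (Fin 4) ℤ) 0 0 with htdef
  set x := (A : Matrix (Fin 4) (Fin 4) ℤ) 1 0 with hxdef
  set y := (A : Matrix (Fin 4) (Fin 4) ℤ) 2 0 with hydef
  set z := (A : Matrix (Fin 4) (Fin 4) ℤ) 3 0 with hzdef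
  have hcol := entry_eq (A : Matrix (Fin 4) (Fin 4) ℤ) hJ 0 0
  have hJ00 : J4 0 0 = 1 := by decide
  rw [hJ00] at hcol
  rcases le_or_gt x 0 with hx | hx <;> rcases le_or_gt y 0 with hy | hy <;>
    rcases le_or_gt z 0 with hz | hz
  · refine ⟨refHE1E2E3, hg1, by decide, ?_, ?_⟩ <;>
    · have hrow := mulrow ((refHE1E2E3 : (Matrix (Fin 4) (Fin 4) ℤ)ˣ) : Matrix (Fin 4) (Fin 4) ℤ) (A : Matrix (Fin 4) (Fin 4) ℤ) ![2,1,1,1] (by decide)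
      simp only [Matrix.cons_val_zero, Matrix.cons_val_one, Matrix.head_cons,
        Matrix.cons_val_two, Matrix.tail_cons, Matrix.cons_val_three] at hrow
      have harith := arith4 t (-x) (-y) (-z) ht (by linarith) (by linarith) (by linarith) (by linarith)
      rw [hrow]; linarith [harith.1, harith.2]
  · refine ⟨refHE1E2E3 * nF3, (mul_mem hg1 hn3), by decide, ?_, ?_⟩ <;>
    · have hrow := mulrow ((refHE1E2E3 * nF3 : (Matrix (Fin 4) (Fin 4) ℤ)ˣ) : Matrix (Fin 4) (Fin 4) ℤ) (A : Matrix (Fin 4) (Fin 4) ℤ) ![2,1,1,-1] (by decide)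
      simp only [Matrix.cons_val_zero, Matrix.cons_val_one, Matrix.head_cons,
        Matrix.cons_val_two, Matrix.tail_cons, Matrix.cons_val_three] at hrow
      have harith := arith4 t (-x) (-y) z ht (by linarith) (by linarith) (by linarith) (le_of_lt hz)
      rw [hrow]; linarith [harith.1, harith.2]
  · refine ⟨refHE1E2E3 * nF2, (mul_mem hg1 hn2), by decide, ?_, ?_⟩ <;>
    · have hrow := mulrow ((refHE1E2E3 * nF2 : (Matrix (Fin 4) (Fin 4) ℤ)ˣ) : Matrix (Fin 4) (Fin 4) ℤ) (A : Matrix (Fin 4) (Fin 4) ℤ) ![2,1,-1,1] (by decide)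
      simp only [Matrix.cons_val_zero, Matrix.cons_val_one, Matrix.head_cons,
        Matrix.cons_val_two, Matrix.tail_cons, Matrix.cons_val_three] at hrow
      have harith := arith4 t (-x) y (-z) ht (by linarith) (by linarith) (le_of_lt hy) (by linarith)
      rw [hrow]; linarith [harith.1, harith.2]
  · refine ⟨refHE1E2E3 * nF2 * nF3, (mul_mem (mul_mem hg1 hn2) hn3), by decide, ?_, ?_⟩ <;>
    · have hrow := mulrow ((refHE1E2E3 * nF2 * nF3 : (Matrix (Fin 4) (Fin 4) ℤ)ˣ) : Matrix (Fin 4) (Fin 4) ℤ) (A : Matrix (Fin 4) (Fin 4) ℤ) ![2,1,-1,-1] (by decide)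
      simp only [Matrix.cons_val_zero, Matrix.cons_val_one, Matrix.head_cons,
        Matrix.cons_val_two, Matrix.tail_cons, Matrix.cons_val_three] at hrow
      have harith := arith4 t (-x) y z ht (by linarith) (by linarith) (le_of_lt hy) (le_of_lt hz)
      rw [hrow]; linarith [harith.1, harith.2]
  · refine ⟨refHE1E2E3 * nF1, (mul_mem hg1 hn1), by decide, ?_, ?_⟩ <;>
    · have hrow := mulrow ((refHE1E2E3 * nF1 : (Matrix (Fin 4) (Fin 4) ℤ)ˣ) : Matrix (Fin 4) (Fin 4) ℤ) (A : Matrix (Fin 4) (Fin 4) ℤ) ![2,-1,1,1] (by decide)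
      simp only [Matrix.cons_val_zero, Matrix.cons_val_one, Matrix.head_cons,
        Matrix.cons_val_two, Matrix.tail_cons, Matrix.cons_val_three] at hrow
      have harith := arith4 t x (-y) (-z) ht (by linarith) (le_of_lt hx) (by linarith) (by linarith)
      rw [hrow]; linarith [harith.1, harith.2]
  · refine ⟨refHE1E2E3 * nF1 * nF3, (mul_mem (mul_mem hg1 hn1) hn3), by decide, ?_, ?_⟩ <;>
    · have hrow := mulrow ((refHE1E2E3 * nF1 * nF3 : (Matrix (Fin 4) (Fin 4) ℤ)ˣ) : Matrix (Fin 4) (Fin 4) ℤ) (A : Matrix (Fin 4) (Fin 4) ℤ) ![2,-1,1,-1] (by decide)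
      simp only [Matrix.cons_val_zero, Matrix.cons_val_one, Matrix.head_cons,
        Matrix.cons_val_two, Matrix.tail_cons, Matrix.cons_val_three] at hrow
      have harith := arith4 t x (-y) z ht (by linarith) (le_of_lt hx) (by linarith) (le_of_lt hz)
      rw [hrow]; linarith [harith.1, harith.2]
  · refine ⟨refHE1E2E3 * nF1 * nF2, (mul_mem (mul_mem hg1 hn1) hn2), by decide, ?_, ?_⟩ <;>
    · have hrow := mulrow ((refHE1E2E3 * nF1 * nF2 : (Matrix (Fin 4) (Fin 4) ℤ)ˣ) : Matrix (Fin 4) (Fin 4) ℤ) (A : Matrix (Fin 4) (Fin 4) ℤ) ![2,-1,-1,1] (by decide)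
      simp only [Matrix.cons_val_zero, Matrix.cons_val_one, Matrix.head_cons,
        Matrix.cons_val_two, Matrix.tail_cons, Matrix.cons_val_three] at hrow
      have harith := arith4 t x y (-z) ht (by linarith) (le_of_lt hx) (le_of_lt hy) (by linarith)
      rw [hrow]; linarith [harith.1, harith.2]
  · refine ⟨refHE1E2E3 * nF1 * nF2 * nF3, (mul_mem (mul_mem (mul_mem hg1 hn1) hn2) hn3), by decide, ?_, ?_⟩ <;>
    · have hrow := mulrow ((refHE1E2E3 * nF1 * nF2 * nF3 : (Matrix (Fin 4) (Fin 4) ℤ)ˣ) : Matrix (Fin 4) (Fin 4) ℤ) (A : Matrix (Fin 4) (Fin 4) ℤ) ![2,-1,-1,-1] (by decide)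
      simp only [Matrix.cons_val_zero, Matrix.cons_val_one, Matrix.head_cons,
        Matrix.cons_val_two, Matrix.tail_cons, Matrix.cons_val_three] at hrow
      have harith := arith4 t x y z ht (by linarith) (le_of_lt hx) (le_of_lt hy) (le_of_lt hz)
      rw [hrow]; linarith [harith.1, harith.2]

/- ### Reverse direction by strong induction on the (0,0) entry -/

set_option maxHeartbeats 2000000 in
lemma rev (n : ℕ) : ∀ A : (Matrix (Fin 4) (Fin 4) ℤ)ˣ,
    (A : Matrix (Fin 4) (Fin 4) ℤ)ᵀ * J4 * A = J4 →
    0 < (A : Matrix (Fin 4) (Fin 4) ℤ) 0 0 →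
    (A : Matrix (Fin 4) (Fin 4) ℤ) 0 0 = (n : ℤ) → A ∈ C4 := by
  induction n using Nat.strong_induction_on with
  | _ n ih =>
    intro A hJ hpos hn
    rcases lt_trichotomy ((A : Matrix (Fin 4) (Fin 4) ℤ) 0 0) 2 with hlt | heq | hgt
    · -- A 0 0 = 1 : block case
      have h1 : (A : Matrix (Fin 4) (Fin 4) ℤ) 0 0 = 1 := by omega
      have hJ00 : J4 0 0 = 1 := by decide
      have hcol := entry_eq (A : Matrix (Fin 4) (Fin 4) ℤ) hJ 0 0
      rw [hJ00, h1] at hcol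
      have hc1 : (A : Matrix (Fin 4) (Fin 4) ℤ) 1 0 = 0 := by nlinarith [sq_nonneg ((A : Matrix (Fin 4) (Fin 4) ℤ) 1 0), sq_nonneg ((A : Matrix (Fin 4) (Fin 4) ℤ) 2 0), sq_nonneg ((A : Matrix (Fin 4) (Fin 4) ℤ) 3 0)]
      have hc2 : (A : Matrix (Fin 4) (Fin 4) ℤ) 2 0 = 0 := by nlinarith [sq_nonneg ((A : Matrix (Fin 4) (Fin 4) ℤ) 1 0), sq_nonneg ((A : Matrix (Fin 4) (Fin 4) ℤ) 2 0), sq_nonneg ((A : Matrix (Fin 4) (Fin 4) ℤ) 3 0)]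
      have hc3 : (A : Matrix (Fin 4) (Fin 4) ℤ) 3 0 = 0 := by nlinarith [sq_nonneg ((A : Matrix (Fin 4) (Fin 4) ℤ) 1 0), sq_nonneg ((A : Matrix (Fin 4) (Fin 4) ℤ) 2 0), sq_nonneg ((A : Matrix (Fin 4) (Fin 4) ℤ) 3 0)]
      have hrowrel := entry_eq (A : Matrix (Fin 4) (Fin 4) ℤ)ᵀ
        (by rw [Matrix.transpose_transpose]; exact row_rel _ hJ) 0 0
      simp only [Matrix.transpose_apply] at hrowrel
      rw [hJ00, h1] at hrowrel
      have hr1 : (A : Matrix (Fin 4) (Fin 4) ℤ) 0 1 = 0 := by nlinarith [sq_nonneg ((A : Matrix (Fin 4) (Fin 4) ℤ) 0 1), sq_nonneg ((A : Matrix (Fin 4) (Fin 4) ℤ) 0 2), sq_nonneg ((A : Matrix (Fin 4) (Fin 4) ℤ) 0 3)]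
      have hr2 : (A : Matrix (Fin 4) (Fin 4) ℤ) 0 2 = 0 := by nlinarith [sq_nonneg ((A : Matrix (Fin 4) (Fin 4) ℤ) 0 1), sq_nonneg ((A : Matrix (Fin 4) (Fin 4) ℤ) 0 2), sq_nonneg ((A : Matrix (Fin 4) (Fin 4) ℤ) 0 3)]
      have hr3 : (A : Matrix (Fin 4) (Fin 4) ℤ) 0 3 = 0 := by nlinarith [sq_nonneg ((A : Matrix (Fin 4) (Fin 4) ℤ) 0 1), sq_nonneg ((A : Matrix (Fin 4) (Fin 4) ℤ) 0 2), sq_nonneg ((A : Matrix (Fin 4) (Fin 4) ℤ) 0 3)]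
      -- columns 1,2,3 are signed basis vectors
      have hJd : ∀ j : Fin 4, j ≠ 0 → J4 j j = -1 := by decide
      have hcolj : ∀ j : Fin 4, (A : Matrix (Fin 4) (Fin 4) ℤ) 0 j = 0 → J4 j j = -1 →
          (A : Matrix (Fin 4) (Fin 4) ℤ) 1 j * (A : Matrix (Fin 4) (Fin 4) ℤ) 1 j +
          (A : Matrix (Fin 4) (Fin 4) ℤ) 2 j * (A : Matrix (Fin 4) (Fin 4) ℤ) 2 j +
          (A : Matrix (Fin 4) (Fin 4) ℤ) 3 j * (A : Matrix (Fin 4) (Fin 4) ℤ) 3 j = 1 := by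
        intro j h0 hd
        have := entry_eq (A : Matrix (Fin 4) (Fin 4) ℤ) hJ j j
        rw [hd, h0] at this
        linarith
      obtain ⟨k1, hk1⟩ := col_struct _ _ _ (hcolj 1 hr1 (hJd 1 (by decide)))
      obtain ⟨k2, hk2⟩ := col_struct _ _ _ (hcolj 2 hr2 (hJd 2 (by decide)))
      obtain ⟨k3, hk3⟩ := col_struct _ _ _ (hcolj 3 hr3 (hJd 3 (by decide)))
      rw [Prod.ext_iff, Prod.ext_iff] at hk1 hk2 hk3
      obtain ⟨hk1a, hk1b, hk1c⟩ := hk1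
      obtain ⟨hk2a, hk2b, hk2c⟩ := hk2
      obtain ⟨hk3a, hk3b, hk3c⟩ := hk3
      have horth : ∀ i j : Fin 4, i ≠ j → (A : Matrix (Fin 4) (Fin 4) ℤ) 0 i = 0 →
          (A : Matrix (Fin 4) (Fin 4) ℤ) 0 j = 0 → J4 i j = 0 →
          (A : Matrix (Fin 4) (Fin 4) ℤ) 1 i * (A : Matrix (Fin 4) (Fin 4) ℤ) 1 j +
          (A : Matrix (Fin 4) (Fin 4) ℤ) 2 i * (A : Matrix (Fin 4) (Fin 4) ℤ) 2 j +
          (A : Matrix (Fin 4) (Fin 4) ℤ) 3 i * (A : Matrix (Fin 4) (Fin 4) ℤ) 3 j = 0 := by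
        intro i j hne h0i h0j hJij
        have := entry_eq (A : Matrix (Fin 4) (Fin 4) ℤ) hJ i j
        rw [hJij, h0i] at this
        linarith
      have ho12 : dot3 (cols6 k1) (cols6 k2) = 0 := by
        rw [dot3, ← hk1a, ← hk1b, ← hk1c, ← hk2a, ← hk2b, ← hk2c]
        exact horth 1 2 (by decide) hr1 hr2 (by decide)
      have ho13 : dot3 (cols6 k1) (cols6 k3) = 0 := by
        rw [dot3, ← hk1a, ← hk1b, ← hk1c, ← hk3a, ← hk3b, ← hk3c]
        exact horth 1 3 (by decide) hr1 hr3 (by decide)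
      have ho23 : dot3 (cols6 k2) (cols6 k3) = 0 := by
        rw [dot3, ← hk2a, ← hk2b, ← hk2c, ← hk3a, ← hk3b, ← hk3c]
        exact horth 2 3 (by decide) hr2 hr3 (by decide)
      have hval : (A : Matrix (Fin 4) (Fin 4) ℤ) = M4of k1 k2 k3 := by
        funext i j
        fin_cases i <;> fin_cases j <;>
          simp only [M4of, Matrix.cons_val', Matrix.cons_val_zero, Matrix.cons_val_one,
            Matrix.head_cons, Matrix.empty_val', Matrix.cons_val_fin_one, Matrix.head_fin_const,
            Matrix.cons_val_two, Matrix.tail_cons, Matrix.cons_val_three, Matrix.of_apply] <;>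
          first
            | exact h1 | exact hr1 | exact hr2 | exact hr3
            | exact hc1 | exact hc2 | exact hc3
            | exact hk1a | exact hk1b | exact hk1c
            | exact hk2a | exact hk2b | exact hk2c
            | exact hk3a | exact hk3b | exact hk3c
      exact block_mem A (hval ▸ enum6 k1 k2 k3 ho12 ho13 ho23)
    ·
      -- t = 2 is handled by descent as well; merge with the next case
      obtain ⟨B, hBmem, hBJ, hpos', hlt'⟩ := step A hJ (by omega)
      have hBA : ((B * A : (Matrix (Fin 4) (Fin 4) ℤ)ˣ) : Matrix (Fin 4) (Fin 4) ℤ)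
          = (B : Matrix (Fin 4) (Fin 4) ℤ) * A := rfl
      have hBAJ : ((B * A : (Matrix (Fin 4) (Fin 4) ℤ)ˣ) : Matrix (Fin 4) (Fin 4) ℤ)ᵀ * J4 *
          ((B * A : (Matrix (Fin 4) (Fin 4) ℤ)ˣ) : Matrix (Fin 4) (Fin 4) ℤ) = J4 := by
        rw [hBA, Matrix.transpose_mul]
        calc (A : Matrix (Fin 4) (Fin 4) ℤ)ᵀ * (B : Matrix (Fin 4) (Fin 4) ℤ)ᵀ * J4 *
              ((B : Matrix (Fin 4) (Fin 4) ℤ) * A)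
            = (A : Matrix (Fin 4) (Fin 4) ℤ)ᵀ *
              ((B : Matrix (Fin 4) (Fin 4) ℤ)ᵀ * J4 * B) * A := by simp [Matrix.mul_assoc]
          _ = J4 := by rw [hBJ]; exact hJ
      have hmem : B * A ∈ C4 := by
        apply ih (((B : Matrix (Fin 4) (Fin 4) ℤ) * A) 0 0).toNat _ (B * A) hBAJ
          (by rw [hBA]; exact hpos') (by rw [hBA]; omega)
        omega
      have : A = B⁻¹ * (B * A) := by rw [← mul_assoc, inv_mul_cancel, one_mul]
      rw [this]
      exact mul_mem (inv_mem hBmem) hmem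
    · obtain ⟨B, hBmem, hBJ, hpos', hlt'⟩ := step A hJ (by omega)
      have hBA : ((B * A : (Matrix (Fin 4) (Fin 4) ℤ)ˣ) : Matrix (Fin 4) (Fin 4) ℤ)
          = (B : Matrix (Fin 4) (Fin 4) ℤ) * A := rfl
      have hBAJ : ((B * A : (Matrix (Fin 4) (Fin 4) ℤ)ˣ) : Matrix (Fin 4) (Fin 4) ℤ)ᵀ * J4 *
          ((B * A : (Matrix (Fin 4) (Fin 4) ℤ)ˣ) : Matrix (Fin 4) (Fin 4) ℤ) = J4 := by
        rw [hBA, Matrix.transpose_mul]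
        calc (A : Matrix (Fin 4) (Fin 4) ℤ)ᵀ * (B : Matrix (Fin 4) (Fin 4) ℤ)ᵀ * J4 *
              ((B : Matrix (Fin 4) (Fin 4) ℤ) * A)
            = (A : Matrix (Fin 4) (Fin 4) ℤ)ᵀ *
              ((B : Matrix (Fin 4) (Fin 4) ℤ)ᵀ * J4 * B) * A := by simp [Matrix.mul_assoc]
          _ = J4 := by rw [hBJ]; exact hJ
      have hmem : B * A ∈ C4 := by
        apply ih (((B : Matrix (Fin 4) (Fin 4) ℤ) * A) 0 0).toNat _ (B * A) hBAJ
          (by rw [hBA]; exact hpos') (by rw [hBA]; omega)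
        omega
      have : A = B⁻¹ * (B * A) := by rw [← mul_assoc, inv_mul_cancel, one_mul]
      rw [this]
      exact mul_mem (inv_mem hBmem) hmem

/-- The subgroup of `GL(4,ℤ)` generated by the four reflections
`Ref_{H−E₁−E₂−E₃}`, `Ref_{E₁−E₂}`, `Ref_{E₂−E₃}`, `Ref_{E₃}` is exactly
`O⁺(3,1)(ℤ) = {A ∈ GL(4,ℤ) : Aᵀ J A = J, A₀₀ > 0}`. -/
theorem Oplus31_generated_by_reflections (A : (Matrix (Fin 4) (Fin 4) ℤ)ˣ) :
    A ∈ Subgroup.closure {refHE1E2E3, refE1E2', refE2E3, refE3} ↔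
      ((A : Matrix (Fin 4) (Fin 4) ℤ)ᵀ * J4 * (A : Matrix (Fin 4) (Fin 4) ℤ) = J4 ∧
        0 < (A : Matrix (Fin 4) (Fin 4) ℤ) 0 0) := by
  constructor
  · exact fwd A
  · rintro ⟨hJ, hpos⟩
    exact rev ((A : Matrix (Fin 4) (Fin 4) ℤ) 0 0).toNat A hJ hpos (by omega)
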